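/- arXiv:2011.13666 — 5 statements merged into one kernel-verified Lean document; each statement's English description precedes it below -/
import Mathlib

section
/- Let g : [a,b] → ℝ be continuous and nonnegative with g(a) = g(b) = 0, and let E = C(g,[a,b]) ⊆ ℝⁿ be the associated solid of revolution about the x₁-axis. Then for every fixed x₁ ∈ ℝ, the function x' ↦ d̄_E(x₁, x') on ℝ^{n-1} (signed distance to E) is radially symmetric, i.e., it depends only on |x'|, and it is strictly increasing as a function of |x'|. -/
/-!
Linear isometries fixing the axis `e` preserve the solid, and any two points with the same
axial coordinate and the same radius `‖radialPart e x‖` are exchanged by one of them (a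
reflection), so the signed distance depends only on these two numbers.

For strict monotonicity in the radius, compare nearest points in the half-plane spanned by `e`
and a unit vector `u ⊥ e`. Outside the solid, a nearest point `p` of the solid to the outer
point, moved radially to the smaller radius, is either strictly closer to the inner point or lies
in the interior of the solid; and from a point of the interior one can always get strictly
closer. Interior points are available because `g` vanishes at the endpoints and is continuous.
Inside the solid the same argument runs with the complement, moving `p` radially outward.
-/

open Set Metric Classical

noncomputable def sdist {n : ℕ} (E : Set (EuclideanSpace ℝ (Fin n)))
    (x : EuclideanSpace ℝ (Fin n)) : ℝ :=
  if x ∈ E then -Metric.infDist x Eᶜ else Metric.infDist x E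

open Filter Topology
open scoped RealInnerProductSpace

theorem Metric.infDist_lt_dist_of_mem_interior {F : Type*} [NormedAddCommGroup F]
    [NormedSpace ℝ F] {s : Set F} {x q : F} (hq : q ∈ interior s) (hxq : x ≠ q) :
    infDist x s < dist x q := by
  have hseg : Tendsto (fun θ : ℝ => q + θ • (x - q)) (𝓝[>] 0) (𝓝 q) := by
    have : Continuous (fun θ : ℝ => q + θ • (x - q)) := by fun_prop
    simpa using this.continuousWithinAt.tendsto (x := 0) (s := Ioi 0)
  obtain ⟨θ, hθs, hθ⟩ := ((hseg.eventually (mem_interior_iff_mem_nhds.1 hq)).and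
    (Ioo_mem_nhdsGT one_pos)).exists
  calc infDist x s ≤ dist x (q + θ • (x - q)) := infDist_le_dist_of_mem hθs
    _ = (1 - θ) * dist x q := by
      rw [dist_eq_norm, dist_eq_norm,
        show x - (q + θ • (x - q)) = (1 - θ) • (x - q) by module, norm_smul,
        Real.norm_of_nonneg (by linarith [hθ.2])]
    _ < dist x q := by nlinarith [hθ.1, dist_pos.2 hxq]

theorem IsometryEquiv.infDist_apply_of_preimage_eq {α : Type*} [PseudoMetricSpace α]
    (Φ : α ≃ᵢ α) {s : Set α} (hs : Φ ⁻¹' s = s) (x : α) : infDist (Φ x) s = infDist x s := by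
  conv_lhs => rw [← image_preimage_eq s Φ.surjective, hs]
  exact infDist_image Φ.isometry

section Axial

variable {F : Type*} [NormedAddCommGroup F] [InnerProductSpace ℝ F] {e u : F}

def radialPart (e z : F) : F := z - ⟪e, z⟫ • e

theorem continuous_radialPart (e : F) : Continuous (radialPart e) := by
  unfold radialPart; fun_prop

theorem inner_radialPart (he : ‖e‖ = 1) (z : F) : ⟪e, radialPart e z⟫ = 0 := by
  simp [radialPart, inner_sub_right, inner_smul_right, he]

theorem norm_sub_sq_eq_sq_inner_sub_add (he : ‖e‖ = 1) (z w : F) :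
    ‖z - w‖ ^ 2 = (⟪e, z⟫ - ⟪e, w⟫) ^ 2 + ‖radialPart e z - radialPart e w‖ ^ 2 := by
  have hdecomp : z - w = (⟪e, z⟫ - ⟪e, w⟫) • e + (radialPart e z - radialPart e w) := by
    simp only [radialPart]; module
  have horth : ⟪(⟪e, z⟫ - ⟪e, w⟫) • e, radialPart e z - radialPart e w⟫ = 0 := by
    rw [real_inner_smul_left, inner_sub_right, inner_radialPart he, inner_radialPart he]; ring
  rw [hdecomp, norm_add_sq_real, horth, norm_smul, he, Real.norm_eq_abs, mul_one, sq_abs]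
  ring

theorem norm_sq_eq_sq_inner_add (he : ‖e‖ = 1) (z : F) :
    ‖z‖ ^ 2 = ⟪e, z⟫ ^ 2 + ‖radialPart e z‖ ^ 2 := by
  simpa [radialPart] using norm_sub_sq_eq_sq_inner_sub_add he z 0

theorem sq_inner_sub_add_sq_le_norm_sub_sq (he : ‖e‖ = 1) (z w : F) :
    (⟪e, z⟫ - ⟪e, w⟫) ^ 2 + (‖radialPart e z‖ - ‖radialPart e w‖) ^ 2 ≤ ‖z - w‖ ^ 2 := by
  rw [norm_sub_sq_eq_sq_inner_sub_add he, ← sq_abs (‖_‖ - ‖_‖)]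
  gcongr
  exact abs_norm_sub_norm_le _ _

theorem inner_map_of_map_eq (R : F ≃ₗᵢ[ℝ] F) (hR : R e = e) (z : F) :
    ⟪e, R z⟫ = ⟪e, z⟫ := by
  conv_lhs => rw [← hR]
  exact R.inner_map_map e z

theorem radialPart_map_of_map_eq (R : F ≃ₗᵢ[ℝ] F) (hR : R e = e) (z : F) :
    radialPart e (R z) = R (radialPart e z) := by
  rw [radialPart, radialPart, inner_map_of_map_eq R hR, map_sub, map_smul, hR]

theorem exists_linearIsometryEquiv_map_eq (he : ‖e‖ = 1) {x y : F} (h0 : ⟪e, x⟫ = ⟪e, y⟫)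
    (hr : ‖radialPart e x‖ = ‖radialPart e y‖) :
    ∃ R : F ≃ₗᵢ[ℝ] F, R e = e ∧ R x = y := by
  have hxy : ‖x‖ = ‖y‖ := by
    rw [← sq_eq_sq₀ (norm_nonneg _) (norm_nonneg _), norm_sq_eq_sq_inner_add he x,
      norm_sq_eq_sq_inner_add he y, h0, hr]
  refine ⟨(ℝ ∙ (x - y))ᗮ.reflection, Submodule.reflection_mem_subspace_eq_self ?_,
    Submodule.reflection_sub hxy⟩
  rw [Submodule.mem_orthogonal_singleton_iff_inner_left, inner_sub_right, h0, sub_self]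

theorem inner_smul_add_smul (he : ‖e‖ = 1) (heu : ⟪e, u⟫ = 0) (t ρ : ℝ) :
    ⟪e, t • e + ρ • u⟫ = t := by
  simp [inner_add_right, inner_smul_right, he, heu]

theorem norm_radialPart_smul_add_smul (he : ‖e‖ = 1) (hu : ‖u‖ = 1) (heu : ⟪e, u⟫ = 0)
    (t ρ : ℝ) : ‖radialPart e (t • e + ρ • u)‖ = |ρ| := by
  rw [radialPart, inner_smul_add_smul he heu, add_sub_cancel_left, norm_smul, hu,
    Real.norm_eq_abs, mul_one]

theorem dist_smul_add_smul_sq (he : ‖e‖ = 1) (hu : ‖u‖ = 1) (heu : ⟪e, u⟫ = 0)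
    (c r t ρ : ℝ) : dist (c • e + r • u) (t • e + ρ • u) ^ 2 = (c - t) ^ 2 + (r - ρ) ^ 2 := by
  rw [dist_eq_norm, norm_sub_sq_eq_sq_inner_sub_add he]
  simp only [radialPart, inner_smul_add_smul he heu, add_sub_cancel_left, ← sub_smul,
    norm_smul, hu, Real.norm_eq_abs, mul_one, sq_abs]

variable {a b : ℝ} {g : ℝ → ℝ}

def solidOfRevolution (e : F) (a b : ℝ) (g : ℝ → ℝ) : Set F :=
  {z | ⟪e, z⟫ ∈ Icc a b ∧ ‖radialPart e z‖ ≤ g ⟪e, z⟫}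

theorem preimage_solidOfRevolution (R : F ≃ₗᵢ[ℝ] F) (hR : R e = e) :
    R ⁻¹' solidOfRevolution e a b g = solidOfRevolution e a b g := by
  ext z
  simp only [solidOfRevolution, mem_preimage, mem_ofPred_eq, inner_map_of_map_eq R hR,
    radialPart_map_of_map_eq R hR, LinearIsometryEquiv.norm_map]

theorem preimage_compl_solidOfRevolution (R : F ≃ₗᵢ[ℝ] F) (hR : R e = e) :
    R ⁻¹' (solidOfRevolution e a b g)ᶜ = (solidOfRevolution e a b g)ᶜ := by
  rw [preimage_compl, preimage_solidOfRevolution R hR]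

theorem infDist_congr_of_forall_preimage_eq {s : Set F}
    (hs : ∀ R : F ≃ₗᵢ[ℝ] F, R e = e → R ⁻¹' s = s) (he : ‖e‖ = 1) {x y : F}
    (h0 : ⟪e, x⟫ = ⟪e, y⟫) (hr : ‖radialPart e x‖ = ‖radialPart e y‖) :
    infDist x s = infDist y s := by
  obtain ⟨R, hRe, rfl⟩ := exists_linearIsometryEquiv_map_eq he h0 hr
  exact (R.toIsometryEquiv.infDist_apply_of_preimage_eq (hs R hRe) x).symm

theorem smul_add_smul_mem_solidOfRevolution_iff (he : ‖e‖ = 1) (hu : ‖u‖ = 1)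
    (heu : ⟪e, u⟫ = 0) (t ρ : ℝ) :
    t • e + ρ • u ∈ solidOfRevolution e a b g ↔ t ∈ Icc a b ∧ |ρ| ≤ g t := by
  simp only [solidOfRevolution, mem_ofPred_eq, inner_smul_add_smul he heu,
    norm_radialPart_smul_add_smul he hu heu]

theorem smul_mem_solidOfRevolution (he : ‖e‖ = 1) (hab : a ≤ b) (hga : g a = 0) :
    a • e ∈ solidOfRevolution e a b g := by
  simp [solidOfRevolution, radialPart, inner_smul_right, he, hab, hga]

theorem smul_notMem_solidOfRevolution (he : ‖e‖ = 1) :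
    (b + 1) • e ∉ solidOfRevolution e a b g := by
  simp [solidOfRevolution, inner_smul_right, he]

theorem isClosed_solidOfRevolution (hg : ContinuousOn g (Icc a b)) :
    IsClosed (solidOfRevolution e a b g) := by
  have hcoord : Continuous fun z : F => ⟪e, z⟫ := continuous_const.inner continuous_id
  exact (isClosed_Icc.preimage hcoord).isClosed_le (continuous_radialPart e).norm.continuousOn
    (hg.comp hcoord.continuousOn (mapsTo_preimage _ _))

theorem mem_interior_solidOfRevolution (hg : ContinuousOn g (Icc a b)) (hga : g a = 0)
    (hgb : g b = 0) {z : F} (h0 : ⟪e, z⟫ ∈ Icc a b) (hr : ‖radialPart e z‖ < g ⟪e, z⟫) :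
    z ∈ interior (solidOfRevolution e a b g) := by
  have hcoord : Continuous fun z : F => ⟪e, z⟫ := continuous_const.inner continuous_id
  have hpos : 0 < g ⟪e, z⟫ := (norm_nonneg _).trans_lt hr
  have h0' : ⟪e, z⟫ ∈ Ioo a b :=
    ⟨h0.1.lt_of_ne (by rintro h; rw [← h, hga] at hpos; exact hpos.false),
      h0.2.lt_of_ne (by rintro h; rw [h, hgb] at hpos; exact hpos.false)⟩
  have hopen : IsOpen ((fun z : F => ⟪e, z⟫) ⁻¹' Ioo a b ∩
      (fun z => (‖radialPart e z‖, g ⟪e, z⟫)) ⁻¹' {p : ℝ × ℝ | p.1 < p.2}) :=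
    ContinuousOn.isOpen_inter_preimage
      ((continuous_radialPart e).norm.continuousOn.prodMk
        ((hg.mono Ioo_subset_Icc_self).comp hcoord.continuousOn (mapsTo_preimage _ _)))
      (isOpen_Ioo.preimage hcoord) (isOpen_lt continuous_fst continuous_snd)
  refine interior_maximal ?_ hopen ⟨h0', hr⟩
  rintro w ⟨hw0, hwr⟩
  exact ⟨Ioo_subset_Icc_self hw0, hwr.le⟩

variable [ProperSpace F]

theorem infDist_solidOfRevolution_lt (he : ‖e‖ = 1) (hu : ‖u‖ = 1) (heu : ⟪e, u⟫ = 0)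
    (hab : a ≤ b) (hg : ContinuousOn g (Icc a b)) (hga : g a = 0) (hgb : g b = 0)
    {c r s : ℝ} (hr : 0 ≤ r) (hrs : r < s) (hx : c • e + r • u ∉ solidOfRevolution e a b g) :
    infDist (c • e + r • u) (solidOfRevolution e a b g) <
      infDist (c • e + s • u) (solidOfRevolution e a b g) := by
  obtain ⟨p, ⟨ht, hρg⟩, hp⟩ := (isClosed_solidOfRevolution hg).exists_infDist_eq_dist
    ⟨_, smul_mem_solidOfRevolution he hab hga⟩ (c • e + s • u)
  set t := ⟪e, p⟫
  set ρ := ‖radialPart e p‖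
  have hdist : (c - t) ^ 2 + (s - ρ) ^ 2 ≤ dist (c • e + s • u) p ^ 2 := by
    simpa [dist_eq_norm, inner_smul_add_smul he heu, norm_radialPart_smul_add_smul he hu heu,
      abs_of_pos (hr.trans_lt hrs)] using
      sq_inner_sub_add_sq_le_norm_sub_sq he (c • e + s • u) p
  rw [hp]
  rcases le_or_gt ρ r with hρr | hrρ
  · have hq : t • e + ρ • u ∈ solidOfRevolution e a b g := by
      rw [smul_add_smul_mem_solidOfRevolution_iff he hu heu, abs_of_nonneg (norm_nonneg _)]
      exact ⟨ht, hρg⟩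
    refine (infDist_le_dist_of_mem hq).trans_lt (lt_of_pow_lt_pow_left₀ 2 dist_nonneg ?_)
    rw [dist_smul_add_smul_sq he hu heu]
    nlinarith [norm_nonneg (radialPart e p)]
  · have hq : t • e + r • u ∈ interior (solidOfRevolution e a b g) := by
      refine mem_interior_solidOfRevolution hg hga hgb ?_ ?_ <;>
        simp only [inner_smul_add_smul he heu, norm_radialPart_smul_add_smul he hu heu,
          abs_of_nonneg hr]
      exacts [ht, hrρ.trans_le hρg]
    refine (infDist_lt_dist_of_mem_interior hq
      (ne_of_mem_of_not_mem (interior_subset hq) hx).symm).trans_le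
      (le_of_pow_le_pow_left₀ two_ne_zero dist_nonneg ?_)
    rw [dist_smul_add_smul_sq he hu heu]
    nlinarith

theorem infDist_compl_solidOfRevolution_lt (he : ‖e‖ = 1) (hu : ‖u‖ = 1) (heu : ⟪e, u⟫ = 0)
    (hg : ContinuousOn g (Icc a b)) (hga : g a = 0) (hgb : g b = 0)
    {c r s : ℝ} (hr : 0 ≤ r) (hrs : r < s) (hy : c • e + s • u ∈ solidOfRevolution e a b g) :
    infDist (c • e + s • u) (solidOfRevolution e a b g)ᶜ <
      infDist (c • e + r • u) (solidOfRevolution e a b g)ᶜ := by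
  set S := solidOfRevolution e a b g
  obtain ⟨p, hpS, hp⟩ := isClosed_closure.exists_infDist_eq_dist
    (Set.Nonempty.closure (s := Sᶜ) ⟨_, smul_notMem_solidOfRevolution he⟩) (c • e + r • u)
  rw [infDist_closure] at hp
  set t := ⟪e, p⟫
  set ρ := ‖radialPart e p‖
  have hp_boundary : ¬ (t ∈ Icc a b ∧ ρ < g t) := fun h => by
    rw [closure_compl] at hpS
    exact hpS (mem_interior_solidOfRevolution hg hga hgb h.1 h.2)
  have hdist : (c - t) ^ 2 + (r - ρ) ^ 2 ≤ dist (c • e + r • u) p ^ 2 := by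
    simpa [dist_eq_norm, inner_smul_add_smul he heu, norm_radialPart_smul_add_smul he hu heu,
      abs_of_nonneg hr] using sq_inner_sub_add_sq_le_norm_sub_sq he (c • e + r • u) p
  rw [hp]
  rcases le_or_gt s ρ with hsρ | hρs
  · have hw : infDist (t • e + ρ • u) Sᶜ = 0 := by
      rw [infDist_congr_of_forall_preimage_eq (preimage_compl_solidOfRevolution) he (y := p)
        (inner_smul_add_smul he heu t ρ)
        (by rw [norm_radialPart_smul_add_smul he hu heu, abs_of_nonneg (norm_nonneg _)])]
      exact infDist_zero_of_mem_closure hpS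
    calc infDist (c • e + s • u) Sᶜ
        ≤ infDist (t • e + ρ • u) Sᶜ + dist (c • e + s • u) (t • e + ρ • u) :=
          infDist_le_infDist_add_dist
      _ < dist (c • e + r • u) p := by
        rw [hw, zero_add]
        refine lt_of_pow_lt_pow_left₀ 2 dist_nonneg ?_
        rw [dist_smul_add_smul_sq he hu heu]
        nlinarith
  · have hw : t • e + s • u ∈ Sᶜ := by
      rw [mem_compl_iff, smul_add_smul_mem_solidOfRevolution_iff he hu heu,
        abs_of_pos (hr.trans_lt hrs)]
      exact fun h => hp_boundary ⟨h.1, hρs.trans_le h.2⟩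
    have hw_int : t • e + s • u ∈ interior Sᶜ := by
      rwa [(isClosed_solidOfRevolution hg).isOpen_compl.interior_eq]
    refine (infDist_lt_dist_of_mem_interior hw_int (ne_of_mem_of_not_mem hy hw)).trans_le
      (le_of_pow_le_pow_left₀ two_ne_zero dist_nonneg ?_)
    rw [dist_smul_add_smul_sq he hu heu]
    nlinarith

end Axial

section SignedDistance

variable {n : ℕ} {e u : EuclideanSpace ℝ (Fin n)} {a b : ℝ} {g : ℝ → ℝ}

theorem sdist_solidOfRevolution_congr (he : ‖e‖ = 1) {x y : EuclideanSpace ℝ (Fin n)}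
    (h0 : ⟪e, x⟫ = ⟪e, y⟫) (hr : ‖radialPart e x‖ = ‖radialPart e y‖) :
    sdist (solidOfRevolution e a b g) x = sdist (solidOfRevolution e a b g) y := by
  have hmem : x ∈ solidOfRevolution e a b g ↔ y ∈ solidOfRevolution e a b g := by
    simp only [solidOfRevolution, mem_ofPred_eq, h0, hr]
  simp only [sdist, hmem, infDist_congr_of_forall_preimage_eq preimage_solidOfRevolution he h0 hr,
    infDist_congr_of_forall_preimage_eq preimage_compl_solidOfRevolution he h0 hr]

theorem sdist_solidOfRevolution_eq_smul_add_smul (he : ‖e‖ = 1) (hu : ‖u‖ = 1)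
    (heu : ⟪e, u⟫ = 0) (x : EuclideanSpace ℝ (Fin n)) :
    sdist (solidOfRevolution e a b g) x =
      sdist (solidOfRevolution e a b g) (⟪e, x⟫ • e + ‖radialPart e x‖ • u) :=
  sdist_solidOfRevolution_congr he (inner_smul_add_smul he heu _ _).symm
    (by rw [norm_radialPart_smul_add_smul he hu heu, abs_norm])

theorem sdist_solidOfRevolution_lt (he : ‖e‖ = 1) (hu : ‖u‖ = 1) (heu : ⟪e, u⟫ = 0)
    (hab : a ≤ b) (hg : ContinuousOn g (Icc a b)) (hga : g a = 0) (hgb : g b = 0)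
    {c r s : ℝ} (hr : 0 ≤ r) (hrs : r < s) :
    sdist (solidOfRevolution e a b g) (c • e + r • u) <
      sdist (solidOfRevolution e a b g) (c • e + s • u) := by
  by_cases hy : c • e + s • u ∈ solidOfRevolution e a b g
  · have hx : c • e + r • u ∈ solidOfRevolution e a b g := by
      rw [smul_add_smul_mem_solidOfRevolution_iff he hu heu] at hy ⊢
      exact ⟨hy.1, ((abs_of_nonneg hr).trans_le (hrs.le.trans (le_abs_self s))).trans hy.2⟩
    rw [sdist, sdist, if_pos hx, if_pos hy, neg_lt_neg_iff]
    exact infDist_compl_solidOfRevolution_lt he hu heu hg hga hgb hr hrs hy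
  by_cases hx : c • e + r • u ∈ solidOfRevolution e a b g
  · rw [sdist, sdist, if_pos hx, if_neg hy]
    exact (neg_nonpos.2 infDist_nonneg).trans_lt
      (((isClosed_solidOfRevolution hg).notMem_iff_infDist_pos
        ⟨_, smul_mem_solidOfRevolution he hab hga⟩).1 hy)
  · rw [sdist, sdist, if_neg hx, if_neg hy]
    exact infDist_solidOfRevolution_lt he hu heu hab hg hga hgb hr hrs hx

end SignedDistance

theorem sdist_section_radial_strictMono_general
    (n : ℕ) [NeZero n] (hn : 2 ≤ n) (a b : ℝ) (hab : a < b)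
    (g : ℝ → ℝ) (hgc : ContinuousOn g (Set.Icc a b))
    (hga : g a = 0) (hgb : g b = 0)
    (E : Set (EuclideanSpace ℝ (Fin n)))
    (hE : E = {x : EuclideanSpace ℝ (Fin n) |
      x 0 ∈ Set.Icc a b ∧ ‖x - x 0 • EuclideanSpace.single (0 : Fin n) (1:ℝ)‖ ≤ g (x 0)}) :
    ∀ x y : EuclideanSpace ℝ (Fin n), x 0 = y 0 →
      ((‖x - x 0 • EuclideanSpace.single (0 : Fin n) (1:ℝ)‖
          = ‖y - y 0 • EuclideanSpace.single (0 : Fin n) (1:ℝ)‖ → sdist E x = sdist E y) ∧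
       (‖x - x 0 • EuclideanSpace.single (0 : Fin n) (1:ℝ)‖
          < ‖y - y 0 • EuclideanSpace.single (0 : Fin n) (1:ℝ)‖ → sdist E x < sdist E y)) := by
  set e : EuclideanSpace ℝ (Fin n) := EuclideanSpace.single 0 1
  set u : EuclideanSpace ℝ (Fin n) := EuclideanSpace.single ⟨1, hn⟩ 1
  have he : ‖e‖ = 1 := by simp [e]
  have hu : ‖u‖ = 1 := by simp [u]
  have heu : ⟪e, u⟫ = 0 := by simp [e, u, EuclideanSpace.inner_single_left, Fin.ext_iff]
  have hcoord (z : EuclideanSpace ℝ (Fin n)) : z 0 = ⟪e, z⟫ := by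
    simp [e, EuclideanSpace.inner_single_left]
  obtain rfl : E = solidOfRevolution e a b g := by
    simp only [hE, hcoord]; rfl
  simp only [hcoord]
  intro x y h0
  refine ⟨sdist_solidOfRevolution_congr he h0, fun hr => ?_⟩
  rw [sdist_solidOfRevolution_eq_smul_add_smul he hu heu x,
    sdist_solidOfRevolution_eq_smul_add_smul he hu heu y, h0]
  exact sdist_solidOfRevolution_lt he hu heu hab.le hgc hga hgb (norm_nonneg _) hr

/-- For a solid of revolution E = C(g,[a,b]) about the x₁-axis, generated
by a continuous nonnegative g vanishing at the endpoints, for every fixed first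
coordinate the signed distance function, as a function of the remaining coordinates
x', is radially symmetric and strictly increasing in |x'|. -/
theorem sdist_section_radial_strictMono
    (n : ℕ) [NeZero n] (hn : 2 ≤ n) (a b : ℝ) (hab : a < b)
    (g : ℝ → ℝ) (hgc : ContinuousOn g (Set.Icc a b))
    (hg0 : ∀ t ∈ Set.Icc a b, 0 ≤ g t) (hga : g a = 0) (hgb : g b = 0)
    (E : Set (EuclideanSpace ℝ (Fin n)))
    (hE : E = {x : EuclideanSpace ℝ (Fin n) |
      x 0 ∈ Set.Icc a b ∧ ‖x - x 0 • EuclideanSpace.single (0 : Fin n) (1:ℝ)‖ ≤ g (x 0)}) :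
    ∀ x y : EuclideanSpace ℝ (Fin n), x 0 = y 0 →
      ((‖x - x 0 • EuclideanSpace.single (0 : Fin n) (1:ℝ)‖
          = ‖y - y 0 • EuclideanSpace.single (0 : Fin n) (1:ℝ)‖ → sdist E x = sdist E y) ∧
       (‖x - x 0 • EuclideanSpace.single (0 : Fin n) (1:ℝ)‖
          < ‖y - y 0 • EuclideanSpace.single (0 : Fin n) (1:ℝ)‖ → sdist E x < sdist E y)) :=
  sdist_section_radial_strictMono_general n hn a b hab g hgc hga hgb E hE
end

section
/- Fix r > 0 and h > 0, and set E = B(-r e₁, r) ∪ B(r e₁, r) ⊆ ℝⁿ (two tangent open balls of radius r meeting at the origin). Let τ ∈ (0, r/2] and suppose h is small enough that η h ≤ τ h^{1/2}/2 for a given η > 0. Then there exists a constant C = C(r) such that the signed distance function satisfies d̄_E(x) ≤ C τ² h^{1/2} for every x in the cylinder C(τ h^{1/4}, τ h^{1/2}) = {x : |x₁| ≤ τ h^{1/2}, |x'| ≤ τ h^{1/4}}. -/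
open Set Metric Classical

theorem sdist_le_infDist {n : ℕ} (E : Set (EuclideanSpace ℝ (Fin n)))
    (x : EuclideanSpace ℝ (Fin n)) : sdist E x ≤ infDist x E := by
  unfold sdist
  split_ifs with hx
  · rw [infDist_zero_of_mem hx, neg_nonpos]
    exact infDist_nonneg
  · exact le_rfl

theorem infDist_ball_le_dist_sub {V : Type*} [NormedAddCommGroup V] [NormedSpace ℝ V]
    {c x : V} {r : ℝ} (hr : 0 < r) (hx : r ≤ dist x c) :
    infDist x (ball c r) ≤ dist x c - r := by
  have hd : 0 < dist x c := hr.trans_le hx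
  set y := AffineMap.lineMap c x (r / dist x c)
  have hy : y ∈ closedBall c r := by
    rw [mem_closedBall, dist_lineMap_left, Real.norm_of_nonneg (by positivity), dist_comm c x,
      div_mul_cancel₀ _ hd.ne']
  calc infDist x (ball c r) = infDist x (closedBall c r) := by
        rw [← closure_ball c hr.ne', infDist_closure]
    _ ≤ dist x y := infDist_le_dist_of_mem hy
    _ = dist x c - r := by
        rw [dist_comm, dist_lineMap_right, dist_comm c,
          Real.norm_of_nonneg (sub_nonneg.2 ((div_le_one hd).2 hx))]
        field_simp

-- `d - r = (d² - r²) / (d + r)` for the distance `d` to the centre, and `d + r ≥ 2r`.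
theorem infDist_ball_le_of_dist_sq_le {V : Type*} [NormedAddCommGroup V] [NormedSpace ℝ V]
    {c x : V} {r δ : ℝ} (hr : 0 < r) (hδ : 0 ≤ δ) (hx : dist x c ^ 2 ≤ r ^ 2 + δ) :
    infDist x (ball c r) ≤ δ / (2 * r) := by
  by_cases hxc : x ∈ ball c r
  · rw [infDist_zero_of_mem hxc]
    positivity
  have hrd : r ≤ dist x c := not_lt.1 hxc
  refine (infDist_ball_le_dist_sub hr hrd).trans ?_
  rw [le_div_iff₀ (by positivity)]
  nlinarith

theorem dist_smul_single_sq {ι : Type*} [Fintype ι] [DecidableEq ι] (i : ι)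
    (x : EuclideanSpace ℝ ι) (a : ℝ) :
    dist x (a • EuclideanSpace.single i 1) ^ 2
      = (x i - a) ^ 2 + ‖x - x i • EuclideanSpace.single i 1‖ ^ 2 := by
  set e : EuclideanSpace ℝ ι := EuclideanSpace.single i 1
  have horth : inner ℝ ((x i - a) • e) (x - x i • e) = 0 := by
    simp [e, real_inner_smul_left, EuclideanSpace.inner_single_left]
  have hsplit : x - a • e = (x i - a) • e + (x - x i • e) := by
    rw [sub_smul]; abel
  rw [dist_eq_norm, hsplit, norm_add_sq_real, horth, mul_zero, add_zero, norm_smul,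
    PiLp.norm_single, norm_one, mul_one, Real.norm_eq_abs, sq_abs]

theorem infDist_union_tangent_balls_le {ι : Type*} [Fintype ι] [DecidableEq ι] (i : ι)
    {r : ℝ} (hr : 0 < r) (x : EuclideanSpace ℝ ι) :
    infDist x (ball ((-r) • EuclideanSpace.single i 1) r ∪ ball (r • EuclideanSpace.single i 1) r)
      ≤ (x i ^ 2 + ‖x - x i • EuclideanSpace.single i 1‖ ^ 2) / (2 * r) := by
  have hball : ∀ s : ℝ, s ^ 2 = r ^ 2 → 0 ≤ s * x i →
      infDist x (ball (s • EuclideanSpace.single i 1) r)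
        ≤ (x i ^ 2 + ‖x - x i • EuclideanSpace.single i 1‖ ^ 2) / (2 * r) := by
    intro s hs hsx
    refine infDist_ball_le_of_dist_sq_le hr (by positivity) ?_
    rw [dist_smul_single_sq]
    nlinarith
  rcases le_total 0 (x i) with hxi | hxi
  · exact (infDist_le_infDist_of_subset subset_union_right (nonempty_ball.2 hr)).trans
      (hball r rfl (mul_nonneg hr.le hxi))
  · exact (infDist_le_infDist_of_subset subset_union_left (nonempty_ball.2 hr)).trans
      (hball (-r) (neg_sq r) (by nlinarith))

theorem sq_add_sq_le_of_mem_cylinder {τ h a b : ℝ} (hh : 0 < h) (hh1 : h ≤ 1)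
    (ha : |a| ≤ τ * h ^ ((1 : ℝ) / 2)) (hb : 0 ≤ b) (hbτ : b ≤ τ * h ^ ((1 : ℝ) / 4)) :
    a ^ 2 + b ^ 2 ≤ 2 * τ ^ 2 * h ^ ((1 : ℝ) / 2) := by
  have hsq_half : (h ^ ((1 : ℝ) / 2)) ^ 2 = h := by
    rw [← Real.rpow_mul_natCast hh.le]; norm_num
  have hsq_quarter : (h ^ ((1 : ℝ) / 4)) ^ 2 = h ^ ((1 : ℝ) / 2) := by
    rw [← Real.rpow_mul_natCast hh.le]; norm_num
  have hh_le : h ≤ h ^ ((1 : ℝ) / 2) := by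
    simpa using Real.rpow_le_rpow_of_exponent_ge hh hh1 (by norm_num : (1 : ℝ) / 2 ≤ 1)
  have ha2 : a ^ 2 ≤ τ ^ 2 * h := by
    rw [← sq_abs a, ← hsq_half, ← mul_pow]
    exact pow_le_pow_left₀ (abs_nonneg a) ha 2
  have hb2 : b ^ 2 ≤ τ ^ 2 * h ^ ((1 : ℝ) / 2) := by
    rw [← hsq_quarter, ← mul_pow]
    exact pow_le_pow_left₀ hb hbτ 2
  nlinarith [sq_nonneg τ]

theorem sdist_bound_on_cylinder_general
    (n : ℕ) [NeZero n] (r : ℝ) (hr : 0 < r) :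
    ∃ C : ℝ, 0 < C ∧ ∀ η τ h : ℝ, 0 < η → 0 < τ → τ ≤ r / 2 → 0 < h → h ≤ 1 →
      η * h ≤ τ * h ^ ((1:ℝ)/2) / 2 →
      ∀ x : EuclideanSpace ℝ (Fin n),
        |x 0| ≤ τ * h ^ ((1:ℝ)/2) →
        ‖x - x 0 • EuclideanSpace.single (0 : Fin n) (1:ℝ)‖ ≤ τ * h ^ ((1:ℝ)/4) →
        sdist (Metric.ball ((-r) • EuclideanSpace.single (0 : Fin n) (1:ℝ)) r
            ∪ Metric.ball (r • EuclideanSpace.single (0 : Fin n) (1:ℝ)) r) x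
          ≤ C * τ^2 * h ^ ((1:ℝ)/2) := by
  refine ⟨1 / r, by positivity, fun η τ h _ _ _ hh hh1 _ x hx₁ hx' => ?_⟩
  calc _ ≤ _ := sdist_le_infDist _ x
    _ ≤ _ := infDist_union_tangent_balls_le 0 hr x
    _ ≤ 2 * τ ^ 2 * h ^ ((1 : ℝ) / 2) / (2 * r) := by
        gcongr
        exact sq_add_sq_le_of_mem_cylinder hh hh1 hx₁ (norm_nonneg _) hx'
    _ = 1 / r * τ ^ 2 * h ^ ((1 : ℝ) / 2) := by
        field_simp

/-- For E the union of two tangent open balls of radius r touching at the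
origin, there is a constant C = C(r) such that for every τ ∈ (0, r/2], η > 0 and every
small h with ηh ≤ τ h^{1/2}/2, the signed distance to E satisfies
d̄_E(x) ≤ C τ² h^{1/2} on the cylinder {|x₁| ≤ τ h^{1/2}, |x'| ≤ τ h^{1/4}}. -/
theorem sdist_bound_on_cylinder
    (n : ℕ) [NeZero n] (hn : 2 ≤ n) (r : ℝ) (hr : 0 < r) :
    ∃ C : ℝ, 0 < C ∧ ∀ η τ h : ℝ, 0 < η → 0 < τ → τ ≤ r / 2 → 0 < h → h ≤ 1 →
      η * h ≤ τ * h ^ ((1:ℝ)/2) / 2 →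
      ∀ x : EuclideanSpace ℝ (Fin n),
        |x 0| ≤ τ * h ^ ((1:ℝ)/2) →
        ‖x - x 0 • EuclideanSpace.single (0 : Fin n) (1:ℝ)‖ ≤ τ * h ^ ((1:ℝ)/4) →
        sdist (Metric.ball ((-r) • EuclideanSpace.single (0 : Fin n) (1:ℝ)) r
            ∪ Metric.ball (r • EuclideanSpace.single (0 : Fin n) (1:ℝ)) r) x
          ≤ C * τ^2 * h ^ ((1:ℝ)/2) :=
  sdist_bound_on_cylinder_general n r hr
end

section
/- Let r > 0, η > 0, Λ₀ ≥ max{4η², 1}, α ∈ (0, r/4], and δ > 0 with δ ≤ min{Λ₀^{-2}, suitable smallness depending on r, η, α, Λ₀}. For 0 < h ≤ δ and integers i with 1 ≤ i ≤ ⌊δ/h⌋ + 1, define l_{h,i} = Λ₀ h(i-1) + α h^{1/4}, d_{h,i} = 2η h(i-1) + α h^{1/2}, r_{h,i} = r - η h i. Then r_{h,i}² - (r - d_{h,i})² ≥ l_{h,i}², and consequently the sets {x ∈ ℝⁿ : x₁ = ±d_{h,i}, |x'| ≤ l_{h,i}} are contained in closedBall(∓ r e₁, r_{h,i}) ∪ closedBall(±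 r e₁, r_{h,i}). -/
/-!
With `d = 2ηh(i-1) + α√h` and `ρ = r - ηhi`, the difference `ρ² - (r - d)²` factors as
`(d - ηhi)(2r - d - ηhi)`. For `h` and `h(i-1)` below the threshold the first factor is at least
`ηh(i-1) + α√h/2` and the second at least `r`, and their product dominates
`l² ≤ 2Λ₀²h²(i-1)² + 2α²√h`. By Pythagoras along `e₁`, a point with `x₁ = ±d` and `|x'| ≤ l` is
then within `ρ` of `±r e₁`.
-/

open Set Metric RealInnerProductSpace

section UnitVector

variable {E : Type*} [NormedAddCommGroup E] [InnerProductSpace ℝ E] {e : E}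

theorem norm_sub_smul_sq_of_norm_eq_one (he : ‖e‖ = 1) (x : E) (c : ℝ) :
    ‖x - c • e‖ ^ 2 = ‖x - ⟪e, x⟫ • e‖ ^ 2 + (⟪e, x⟫ - c) ^ 2 := by
  have horth : ⟪x - ⟪e, x⟫ • e, (⟪e, x⟫ - c) • e⟫ = 0 := by
    rw [real_inner_smul_right, inner_sub_left, real_inner_smul_left, real_inner_self_eq_norm_sq,
      he, real_inner_comm]
    ring
  have hsplit : x - c • e = (x - ⟪e, x⟫ • e) + (⟪e, x⟫ - c) • e := by module
  rw [hsplit, sq, norm_add_sq_eq_norm_sq_add_norm_sq_real horth, norm_smul, he, mul_one,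
    Real.norm_eq_abs, abs_mul_abs_self]
  ring

theorem mem_closedBall_smul_of_sq_le (he : ‖e‖ = 1) {x : E} {c ρ : ℝ} (hρ : 0 ≤ ρ)
    (h : ‖x - ⟪e, x⟫ • e‖ ^ 2 + (⟪e, x⟫ - c) ^ 2 ≤ ρ ^ 2) :
    x ∈ closedBall (c • e) ρ := by
  rw [mem_closedBall, dist_eq_norm, ← pow_le_pow_iff_left₀ (norm_nonneg _) hρ two_ne_zero,
    norm_sub_smul_sq_of_norm_eq_one he]
  exact h

end UnitVector

theorem head_subset_closedBall_union {n : ℕ} [NeZero n] {r d l ρ : ℝ} (hρ : 0 ≤ ρ)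
    (hl : l ^ 2 ≤ ρ ^ 2 - (r - d) ^ 2) :
    {x : EuclideanSpace ℝ (Fin n) | (x 0 = d ∨ x 0 = -d) ∧
        ‖x - x 0 • EuclideanSpace.single (0 : Fin n) (1 : ℝ)‖ ≤ l}
      ⊆ closedBall ((-r) • EuclideanSpace.single (0 : Fin n) (1 : ℝ)) ρ
        ∪ closedBall (r • EuclideanSpace.single (0 : Fin n) (1 : ℝ)) ρ := by
  set e : EuclideanSpace ℝ (Fin n) := EuclideanSpace.single 0 1
  have he : ‖e‖ = 1 := by simp [e]
  have hcoord (x : EuclideanSpace ℝ (Fin n)) : ⟪e, x⟫ = x 0 := by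
    simp [e, EuclideanSpace.inner_single_left]
  rintro x ⟨hx0 | hx0, hxl⟩
  all_goals
    have hsq : ‖x - x 0 • e‖ ^ 2 ≤ l ^ 2 := pow_le_pow_left₀ (norm_nonneg _) hxl 2
  · have hrim : (x 0 - r) ^ 2 = (r - d) ^ 2 := by rw [hx0]; ring
    exact Or.inr (mem_closedBall_smul_of_sq_le he hρ (by rw [hcoord, hrim]; linarith))
  · have hrim : (x 0 - -r) ^ 2 = (r - d) ^ 2 := by rw [hx0]; ring
    exact Or.inl (mem_closedBall_smul_of_sq_le he hρ (by rw [hcoord, hrim]; linarith))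

theorem head_radius_ineq {r η Λ₀ α h m s t : ℝ} (hr : 0 ≤ r) (hη : 0 ≤ η) (hα : 0 ≤ α)
    (hαr : α ≤ r / 4) (hm : 0 ≤ m) (hs : 0 ≤ s) (ht : t ^ 2 = s)
    (hηh : η * h ≤ α * s / 2) (hαs : 2 * α * s ≤ r) (hηm : 3 * η * m ≤ r / 4)
    (hΛm : 2 * Λ₀ ^ 2 * m ≤ r * η) :
    (Λ₀ * m + α * t) ^ 2 ≤ (r - (η * m + η * h)) ^ 2 - (r - (2 * η * m + α * s)) ^ 2 := by
  have hηm0 : 0 ≤ η * m := mul_nonneg hη hm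
  have hαs0 : 0 ≤ α * s := mul_nonneg hα hs
  have hlower : (η * m + α * s / 2) * r
      ≤ (η * m + α * s - η * h) * (2 * r - 3 * η * m - α * s - η * h) :=
    mul_le_mul (by linarith) (by linarith) hr (by linarith)
  have hΛterm : 2 * Λ₀ ^ 2 * m ^ 2 ≤ r * η * m := by nlinarith
  have hαterm : 2 * α ^ 2 * s ≤ r * (α * s / 2) := by
    nlinarith [mul_nonneg hαs0 (show 0 ≤ r / 4 - α by linarith)]
  calc (Λ₀ * m + α * t) ^ 2 ≤ 2 * Λ₀ ^ 2 * m ^ 2 + 2 * α ^ 2 * s := by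
        nlinarith [sq_nonneg (Λ₀ * m - α * t)]
    _ ≤ r * η * m + r * (α * s / 2) := add_le_add hΛterm hαterm
    _ = (η * m + α * s / 2) * r := by ring
    _ ≤ (η * m + α * s - η * h) * (2 * r - 3 * η * m - α * s - η * h) := hlower
    _ = (r - (η * m + η * h)) ^ 2 - (r - (2 * η * m + α * s)) ^ 2 := by ring

theorem mul_le_of_sq_le_div_sq {s a b : ℝ} (hs : 0 ≤ s) (ha : 0 ≤ a) (hb : 0 < b)
    (h : s ^ 2 ≤ (a / b) ^ 2) : b * s ≤ a := by
  rw [pow_le_pow_iff_left₀ hs (by positivity) two_ne_zero, le_div_iff₀ hb] at h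
  linarith

/-- The first term is the constraint `δ ≤ Λ₀⁻²`; the others give, for `h ≤ δ` and
`m = h (i - 1) ≤ δ`, the inequalities `η h ≤ α √h / 2`, `2 α √h ≤ r`, `3 η m ≤ r / 4` and
`2 Λ₀² m ≤ r η` that `head_radius_ineq` needs. -/
noncomputable def barrierThreshold (r η Λ₀ α : ℝ) : ℝ :=
  min (Λ₀ ^ (-2 : ℝ)) (min ((α / (2 * η)) ^ 2) (min ((r / (2 * α)) ^ 2)
    (min (r / (12 * η)) (r * η / (2 * Λ₀ ^ 2)))))

theorem barrierThreshold_pos {r η Λ₀ α : ℝ} (hr : 0 < r) (hη : 0 < η) (hΛ : 0 < Λ₀)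
    (hα : 0 < α) : 0 < barrierThreshold r η Λ₀ α := by
  unfold barrierThreshold
  positivity

theorem head_radius_ineq_of_le_barrierThreshold {r η Λ₀ α h m : ℝ} (hr : 0 < r) (hη : 0 < η)
    (hα : 0 < α) (hαr : α ≤ r / 4) (hh : 0 < h) (hhδ : h ≤ barrierThreshold r η Λ₀ α)
    (hm : 0 ≤ m) (hmδ : m ≤ barrierThreshold r η Λ₀ α) :
    0 ≤ r - (η * m + η * h) ∧
      (Λ₀ * m + α * h ^ ((1 : ℝ) / 4)) ^ 2
        ≤ (r - (η * m + η * h)) ^ 2 - (r - (2 * η * m + α * h ^ ((1 : ℝ) / 2))) ^ 2 := by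
  simp only [barrierThreshold, le_min_iff] at hhδ hmδ
  obtain ⟨-, hhη, hhα, -, -⟩ := hhδ
  obtain ⟨-, -, -, hmη, hmΛ⟩ := hmδ
  have hs2 : (h ^ ((1 : ℝ) / 2)) ^ 2 = h := by
    rw [← Real.rpow_mul_natCast hh.le]
    norm_num
  have ht2 : (h ^ ((1 : ℝ) / 4)) ^ 2 = h ^ ((1 : ℝ) / 2) := by
    rw [← Real.rpow_mul_natCast hh.le]
    norm_num
  set s := h ^ ((1 : ℝ) / 2)
  have hs : 0 ≤ s := by positivity
  have hsη : 2 * η * s ≤ α :=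
    mul_le_of_sq_le_div_sq hs hα.le (by positivity) (hs2 ▸ hhη)
  have hsα : 2 * α * s ≤ r :=
    mul_le_of_sq_le_div_sq hs hr.le (by positivity) (hs2 ▸ hhα)
  have hηh : η * h ≤ α * s / 2 := by
    rw [← hs2]
    nlinarith
  have hηm : 3 * η * m ≤ r / 4 := by
    have := mul_le_of_le_div₀ hr.le (by positivity) hmη
    linarith
  have hΛm : 2 * Λ₀ ^ 2 * m ≤ r * η := by
    have := mul_le_of_le_div₀ (by positivity) (by positivity) hmΛ
    linarith
  exact ⟨by linarith,
    head_radius_ineq hr.le hη.le hα.le hαr hm hs ht2 hηh hsα hηm hΛm⟩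

theorem barrier_heads_in_balls_general
    (n : ℕ) [NeZero n] (r η Λ₀ α : ℝ)
    (hr : 0 < r) (hη : 0 < η) (hΛ1 : 1 ≤ Λ₀)
    (hα : 0 < α) (hαr : α ≤ r / 4) :
    ∃ δ : ℝ, 0 < δ ∧ δ ≤ Λ₀ ^ (-2 : ℝ) ∧
      ∀ h : ℝ, 0 < h → h ≤ δ → ∀ i : ℕ, 1 ≤ i → (i : ℝ) ≤ δ / h + 1 →
        ((r - η * h * i)^2 - (r - (2 * η * h * ((i:ℝ) - 1) + α * h ^ ((1:ℝ)/2)))^2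
            ≥ (Λ₀ * h * ((i:ℝ) - 1) + α * h ^ ((1:ℝ)/4))^2) ∧
        {x : EuclideanSpace ℝ (Fin n) |
            (x 0 = 2 * η * h * ((i:ℝ) - 1) + α * h ^ ((1:ℝ)/2) ∨
             x 0 = -(2 * η * h * ((i:ℝ) - 1) + α * h ^ ((1:ℝ)/2))) ∧
            ‖x - x 0 • EuclideanSpace.single (0 : Fin n) (1:ℝ)‖
              ≤ Λ₀ * h * ((i:ℝ) - 1) + α * h ^ ((1:ℝ)/4)}
          ⊆ Metric.closedBall ((-r) • EuclideanSpace.single (0 : Fin n) (1:ℝ)) (r - η * h * i)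
            ∪ Metric.closedBall (r • EuclideanSpace.single (0 : Fin n) (1:ℝ)) (r - η * h * i) := by
  refine ⟨barrierThreshold r η Λ₀ α, barrierThreshold_pos hr hη (by linarith) hα,
    min_le_left _ _, ?_⟩
  intro h hh hhδ i hi hiδ
  have hm : 0 ≤ h * ((i : ℝ) - 1) :=
    mul_nonneg hh.le (sub_nonneg.mpr (by exact_mod_cast hi))
  have hmδ : h * ((i : ℝ) - 1) ≤ barrierThreshold r η Λ₀ α := by
    rw [mul_comm, ← le_div_iff₀ hh]
    linarith
  obtain ⟨hρ, hineq⟩ :=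
    head_radius_ineq_of_le_barrierThreshold hr hη hα hαr hh hhδ hm hmδ
  rw [show η * h * i = η * (h * (i - 1)) + η * h by ring,
    show 2 * η * h * ((i : ℝ) - 1) = 2 * η * (h * (i - 1)) by ring,
    show Λ₀ * h * ((i : ℝ) - 1) = Λ₀ * (h * (i - 1)) by ring]
  exact ⟨hineq, head_subset_closedBall_union hρ hineq⟩

/-- With l_{h,i} = Λ₀h(i-1) + αh^{1/4}, d_{h,i} = 2ηh(i-1) + αh^{1/2} and
r_{h,i} = r - ηhi, for δ small (and δ ≤ Λ₀^{-2}), all 0 < h ≤ δ and 1 ≤ i ≤ ⌊δ/h⌋ + 1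
one has r_{h,i}² - (r - d_{h,i})² ≥ l_{h,i}², and hence the heads
{x₁ = ±d_{h,i}, |x'| ≤ l_{h,i}} are contained in closedBall(-r e₁, r_{h,i}) ∪
closedBall(r e₁, r_{h,i}). -/
theorem barrier_heads_in_balls
    (n : ℕ) [NeZero n] (hn : 2 ≤ n) (r η Λ₀ α : ℝ)
    (hr : 0 < r) (hη : 0 < η) (hΛ1 : 1 ≤ Λ₀) (hΛη : 4 * η^2 ≤ Λ₀)
    (hα : 0 < α) (hαr : α ≤ r / 4) :
    ∃ δ : ℝ, 0 < δ ∧ δ ≤ Λ₀ ^ (-2 : ℝ) ∧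
      ∀ h : ℝ, 0 < h → h ≤ δ → ∀ i : ℕ, 1 ≤ i → (i : ℝ) ≤ δ / h + 1 →
        ((r - η * h * i)^2 - (r - (2 * η * h * ((i:ℝ) - 1) + α * h ^ ((1:ℝ)/2)))^2
            ≥ (Λ₀ * h * ((i:ℝ) - 1) + α * h ^ ((1:ℝ)/4))^2) ∧
        {x : EuclideanSpace ℝ (Fin n) |
            (x 0 = 2 * η * h * ((i:ℝ) - 1) + α * h ^ ((1:ℝ)/2) ∨
             x 0 = -(2 * η * h * ((i:ℝ) - 1) + α * h ^ ((1:ℝ)/2))) ∧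
            ‖x - x 0 • EuclideanSpace.single (0 : Fin n) (1:ℝ)‖
              ≤ Λ₀ * h * ((i:ℝ) - 1) + α * h ^ ((1:ℝ)/4)}
          ⊆ Metric.closedBall ((-r) • EuclideanSpace.single (0 : Fin n) (1:ℝ)) (r - η * h * i)
            ∪ Metric.closedBall (r • EuclideanSpace.single (0 : Fin n) (1:ℝ)) (r - η * h * i) :=
  barrier_heads_in_balls_general n r η Λ₀ α hr hη hΛ1 hα hαr
end

section
/- Let n ≥ 3, Λ₀ ≥ 2⁹(n-2)², l > 0, d > 0 with Λ₀^{1/2} d ≤ l, a = Λ₀^{1/2}/l, and φ(t) = (a/2)(t² - d²) + l. Suppose 0 < τ and φ(z₁) - τ ≥ l/4 for some z₁ ∈ (-d,d). Then the quantity H = -a/(1 + (a z₁)²)^{3/2} + (n-2)/((φ(z₁) - τ)(1 + (a z₁)²)^{1/2}) satisfies H ≤ (2^{7/2}(n-2) - Λ₀^{1/2})/(2^{3/2} l) ≤ -Λ₀^{1/2}/(2^{5/2} l). -/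
/-!
At the neck the slope `a z₁` satisfies `|a z₁| ≤ a d ≤ 1`, so `1 ≤ 1 + (a z₁)² ≤ 2`. Hence the
principal curvature of the profile contributes at most `-a / 2^{3/2}` and the rotational
curvatures at most `(n - 2) / (l / 4)`; since `Λ₀ ≥ 2⁹ (n - 2)²`, the first term dominates.
-/

open Set

/-- Mean curvature of a hypersurface of revolution in `ℝⁿ`, `m = n - 2`, at a point where the
profile has value `r`, slope `p` and second derivative `κ`. -/
noncomputable def revolutionMeanCurvature (m κ p r : ℝ) : ℝ :=
  -κ / (1 + p ^ 2) ^ ((3:ℝ) / 2) + m / (r * (1 + p ^ 2) ^ ((1:ℝ) / 2))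

lemma revolutionMeanCurvature_le {m κ p r r₀ : ℝ} (hm : 0 ≤ m) (hκ : 0 ≤ κ) (hp : p ^ 2 ≤ 1)
    (hr₀ : 0 < r₀) (hr : r₀ ≤ r) :
    revolutionMeanCurvature m κ p r ≤ -κ / (2:ℝ) ^ ((3:ℝ) / 2) + m / r₀ := by
  have hu : 1 ≤ 1 + p ^ 2 := by nlinarith [sq_nonneg p]
  have hprofile : -κ / (1 + p ^ 2) ^ ((3:ℝ) / 2) ≤ -κ / (2:ℝ) ^ ((3:ℝ) / 2) := by
    rw [neg_div, neg_div, neg_le_neg_iff]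
    exact div_le_div_of_nonneg_left hκ (by positivity)
      (Real.rpow_le_rpow (by positivity) (by linarith) (by norm_num))
  have hrotation : m / (r * (1 + p ^ 2) ^ ((1:ℝ) / 2)) ≤ m / r₀ := by
    refine div_le_div_of_nonneg_left hm hr₀ ?_
    exact hr.trans (le_mul_of_one_le_right (by linarith) (Real.one_le_rpow hu (by norm_num)))
  exact add_le_add hprofile hrotation

lemma sq_mul_le_one_of_mem_Ioo {a d z : ℝ} (ha : 0 ≤ a) (hz : z ∈ Ioo (-d) d)
    (had : a * d ≤ 1) : (a * z) ^ 2 ≤ 1 := by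
  rw [sq_le_one_iff_abs_le_one, abs_mul, abs_of_nonneg ha]
  exact (mul_le_mul_of_nonneg_left (abs_lt.mpr hz).le ha).trans had

lemma two_rpow_three_halves_sq : ((2:ℝ) ^ ((3:ℝ) / 2)) ^ 2 = 8 := by
  rw [← Real.rpow_mul_natCast (by norm_num)]
  norm_num

theorem mean_curvature_of_neck_negative_general
    (n : ℕ) (hn : 3 ≤ n) (Λ₀ l d a τ z₁ : ℝ)
    (hΛ : 2^9 * ((n:ℝ) - 2)^2 ≤ Λ₀) (hl : 0 < l)
    (hdl : Real.sqrt Λ₀ * d ≤ l)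
    (ha : a = Real.sqrt Λ₀ / l)
    (φ : ℝ → ℝ)
    (hz : z₁ ∈ Set.Ioo (-d) d) (hφτ : l / 4 ≤ φ z₁ - τ)
    (H : ℝ)
    (hH : H = -a / (1 + (a * z₁)^2) ^ ((3:ℝ)/2)
        + ((n:ℝ) - 2) / ((φ z₁ - τ) * (1 + (a * z₁)^2) ^ ((1:ℝ)/2))) :
    H ≤ ((2:ℝ) ^ ((7:ℝ)/2) * ((n:ℝ) - 2) - Real.sqrt Λ₀) / ((2:ℝ) ^ ((3:ℝ)/2) * l) ∧
    ((2:ℝ) ^ ((7:ℝ)/2) * ((n:ℝ) - 2) - Real.sqrt Λ₀) / ((2:ℝ) ^ ((3:ℝ)/2) * l)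
      ≤ -Real.sqrt Λ₀ / ((2:ℝ) ^ ((5:ℝ)/2) * l) := by
  set s := Real.sqrt Λ₀
  set c := (2:ℝ) ^ ((3:ℝ) / 2)
  have hm : (1:ℝ) ≤ n - 2 := by
    have : (3:ℝ) ≤ n := by exact_mod_cast hn
    linarith
  have hc : 0 < c := by positivity
  have hs : 8 * c * (n - 2) ≤ s :=
    (Real.le_sqrt' (mul_pos (by positivity) (by linarith))).mpr
      (by nlinarith [two_rpow_three_halves_sq])
  have ha0 : 0 ≤ a := ha ▸ div_nonneg (Real.sqrt_nonneg _) hl.le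
  have hslope : (a * z₁) ^ 2 ≤ 1 :=
    sq_mul_le_one_of_mem_Ioo ha0 hz (by rw [ha, div_mul_eq_mul_div, div_le_one hl]; exact hdl)
  have hH_le : H ≤ -a / c + (n - 2) / (l / 4) :=
    hH ▸ revolutionMeanCurvature_le (by linarith) ha0 hslope (by linarith) hφτ
  have h72 : (2:ℝ) ^ ((7:ℝ) / 2) = c * 4 := by
    rw [show (7:ℝ) / 2 = 3 / 2 + 2 by norm_num, Real.rpow_add two_pos]
    norm_num [c]
  have h52 : (2:ℝ) ^ ((5:ℝ) / 2) = c * 2 := by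
    rw [show (5:ℝ) / 2 = 3 / 2 + 1 by norm_num, Real.rpow_add two_pos]
    norm_num [c]
  rw [h72, h52]
  constructor
  · convert hH_le using 1
    rw [ha]
    field_simp
    ring
  · rw [div_le_div_iff₀ (by positivity) (by positivity)]
    nlinarith [mul_nonneg (mul_pos hc hl).le (sub_nonneg.mpr hs)]

/-- For n ≥ 3, Λ₀ ≥ 2⁹(n-2)², the parabola φ(t) = (a/2)(t²-d²)+l with
a = Λ₀^{1/2}/l and Λ₀^{1/2}d ≤ l, and any τ > 0, z₁ ∈ (-d,d) with φ(z₁) - τ ≥ l/4,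
the mean curvature expression
H = -a/(1+(az₁)²)^{3/2} + (n-2)/((φ(z₁)-τ)(1+(az₁)²)^{1/2}) satisfies
H ≤ (2^{7/2}(n-2) - Λ₀^{1/2})/(2^{3/2}l) ≤ -Λ₀^{1/2}/(2^{5/2}l). -/
theorem mean_curvature_of_neck_negative
    (n : ℕ) (hn : 3 ≤ n) (Λ₀ l d a τ z₁ : ℝ)
    (hΛ : 2^9 * ((n:ℝ) - 2)^2 ≤ Λ₀) (hl : 0 < l) (hd : 0 < d)
    (hdl : Real.sqrt Λ₀ * d ≤ l)
    (ha : a = Real.sqrt Λ₀ / l)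
    (φ : ℝ → ℝ) (hφ : φ = fun t => a / 2 * (t^2 - d^2) + l)
    (hτ : 0 < τ) (hz : z₁ ∈ Set.Ioo (-d) d) (hφτ : l / 4 ≤ φ z₁ - τ)
    (H : ℝ)
    (hH : H = -a / (1 + (a * z₁)^2) ^ ((3:ℝ)/2)
        + ((n:ℝ) - 2) / ((φ z₁ - τ) * (1 + (a * z₁)^2) ^ ((1:ℝ)/2))) :
    H ≤ ((2:ℝ) ^ ((7:ℝ)/2) * ((n:ℝ) - 2) - Real.sqrt Λ₀) / ((2:ℝ) ^ ((3:ℝ)/2) * l) ∧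
    ((2:ℝ) ^ ((7:ℝ)/2) * ((n:ℝ) - 2) - Real.sqrt Λ₀) / ((2:ℝ) ^ ((3:ℝ)/2) * l)
      ≤ -Real.sqrt Λ₀ / ((2:ℝ) ^ ((5:ℝ)/2) * l) :=
  mean_curvature_of_neck_negative_general n hn Λ₀ l d a τ z₁ hΛ hl hdl ha φ hz hφτ H hH
end

section
/- Let r > 0, h > 0, Λ ∈ ℝ, and suppose r_min > 0 satisfies the Euler–Lagrange relation (r_min - r)/h = -(n-1)/r_min + Λ together with the bound |r_min - r| ≤ γ h^{1/2} for some γ > 0. If Λ = (n-1)/r, then there exists h₀ > 0 depending only on n, r, γ (e.g. h₀ with γ h₀^{1/2} < r/2 and the uniqueness condition below) such that for h ≤ h₀ the only solution is r_min = r. More generally, for h ≤ h₀, r_min - r = (Λ - (n-1)/r)h + O(h²) with the implicit constant depending only on n, r, Λ, γ. -/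
/-!
Write `a = n - 1`. The Euler–Lagrange relation reads `ρ - r = (Λ - a / ρ) h`, and subtracting
`(Λ - a / r) h` from it gives the exact identity `ρ - r - (Λ - a / r) h = a h (ρ - r) / (r ρ)`.
The a priori bound `|ρ - r| ≤ γ √h` keeps `ρ ≥ r / 2` for small `h`, so the relation itself
gives `|ρ - r| = O(h)`, which the identity upgrades to the `O(h²)` estimate. When `Λ = a / r`
the identity says `(ρ - r) (r ρ - a h) = 0`, and `r ρ - a h > 0` for small `h`.
-/

namespace DiscreteEulerLagrange

variable {a r Λ h ρ γ : ℝ}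

theorem sub_sub_linear_eq (hr : r ≠ 0) (hρ : ρ ≠ 0) (hEL : ρ - r = (Λ - a / ρ) * h) :
    ρ - r - (Λ - a / r) * h = a * h * (ρ - r) / (r * ρ) := by
  rw [eq_div_iff (mul_ne_zero hr hρ)]
  field_simp at hEL ⊢
  linear_combination r * hEL

theorem eq_of_critical (hr : r ≠ 0) (hρ : ρ ≠ 0) (hEL : ρ - r = (Λ - a / ρ) * h)
    (hΛ : Λ = a / r) (hsmall : a * h < r * ρ) : ρ = r := by
  have hid := sub_sub_linear_eq hr hρ hEL
  rw [hΛ, sub_self, zero_mul, sub_zero, eq_div_iff (mul_ne_zero hr hρ)] at hid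
  have hfac : (ρ - r) * (r * ρ - a * h) = 0 := by linear_combination hid
  rcases mul_eq_zero.mp hfac with hρr | hsmall'
  · exact sub_eq_zero.mp hρr
  · exact absurd hsmall' (sub_pos.mpr hsmall).ne'

theorem abs_sub_le (hρ : 0 < ρ) (hh : 0 ≤ h) (hEL : ρ - r = (Λ - a / ρ) * h) :
    |ρ - r| ≤ (|Λ| + |a| / ρ) * h := by
  rw [hEL, abs_mul, abs_of_nonneg hh]
  gcongr
  calc |Λ - a / ρ| ≤ |Λ| + |a / ρ| := abs_sub Λ (a / ρ)
    _ = |Λ| + |a| / ρ := by rw [abs_div, abs_of_pos hρ]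

theorem abs_sub_sub_linear_le (hr : 0 < r) (hρ : 0 < ρ) (hh : 0 ≤ h)
    (hEL : ρ - r = (Λ - a / ρ) * h) :
    |ρ - r - (Λ - a / r) * h| ≤ |a| * (|Λ| + |a| / ρ) / (r * ρ) * h ^ 2 := by
  rw [sub_sub_linear_eq hr.ne' hρ.ne' hEL, abs_div, abs_mul, abs_mul, abs_of_nonneg hh,
    abs_of_pos (mul_pos hr hρ)]
  calc |a| * h * |ρ - r| / (r * ρ) ≤ |a| * h * ((|Λ| + |a| / ρ) * h) / (r * ρ) := by
        gcongr; exact abs_sub_le hρ hh hEL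
    _ = |a| * (|Λ| + |a| / ρ) / (r * ρ) * h ^ 2 := by ring

theorem abs_sub_sub_linear_le_of_half_le (hr : 0 < r) (hρ : r / 2 ≤ ρ) (hh : 0 ≤ h)
    (hEL : ρ - r = (Λ - a / ρ) * h) :
    |ρ - r - (Λ - a / r) * h| ≤ 2 * |a| * (|Λ| + 2 * |a| / r) / r ^ 2 * h ^ 2 := by
  have hρ₀ : 0 < ρ := by linarith
  have hinv : |a| / ρ ≤ 2 * |a| / r := by
    rw [div_le_div_iff₀ hρ₀ hr]; nlinarith [abs_nonneg a]
  have hprod : r ^ 2 / 2 ≤ r * ρ := by nlinarith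
  calc |ρ - r - (Λ - a / r) * h| ≤ |a| * (|Λ| + |a| / ρ) / (r * ρ) * h ^ 2 :=
        abs_sub_sub_linear_le hr hρ₀ hh hEL
    _ ≤ |a| * (|Λ| + 2 * |a| / r) / (r ^ 2 / 2) * h ^ 2 := by gcongr
    _ = 2 * |a| * (|Λ| + 2 * |a| / r) / r ^ 2 * h ^ 2 := by field_simp

theorem half_le_of_abs_sub_le_mul_sqrt (hγ : 0 < γ) (hh : h ≤ (r / (2 * γ)) ^ 2) (hr : 0 < r)
    (hbound : |ρ - r| ≤ γ * h ^ ((1 : ℝ) / 2)) : r / 2 ≤ ρ := by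
  have hsqrt : h ^ ((1 : ℝ) / 2) ≤ r / (2 * γ) := by
    rw [← Real.sqrt_eq_rpow, Real.sqrt_le_left (by positivity)]
    exact hh
  have hγsqrt : γ * h ^ ((1 : ℝ) / 2) ≤ r / 2 :=
    calc γ * h ^ ((1 : ℝ) / 2) ≤ γ * (r / (2 * γ)) := by gcongr
      _ = r / 2 := by field_simp
  linarith [(abs_le.mp (hbound.trans hγsqrt)).1]

theorem mul_lt_mul_of_half_le (hr : 0 < r) (hρ : r / 2 ≤ ρ) (hh : 0 ≤ h)
    (hh₀ : h ≤ r ^ 2 / (4 * (|a| + 1))) : a * h < r * ρ := by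
  rw [le_div_iff₀ (by positivity)] at hh₀
  nlinarith [mul_le_mul_of_nonneg_right (le_abs_self a) hh,
    mul_le_mul_of_nonneg_left hρ hr.le, mul_pos hr hr]

end DiscreteEulerLagrange

open DiscreteEulerLagrange in
theorem discrete_euler_lagrange_radius_general
    (n : ℕ) (r Λ γ : ℝ) (hr : 0 < r) (hγ : 0 < γ) :
    ∃ h₀ : ℝ, 0 < h₀ ∧ ∃ C : ℝ, 0 < C ∧
      ∀ h rmin : ℝ, 0 < h → h ≤ h₀ → 0 < rmin →
        (rmin - r) / h = -((n:ℝ) - 1) / rmin + Λ →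
        |rmin - r| ≤ γ * h ^ ((1:ℝ)/2) →
        ((Λ = ((n:ℝ) - 1) / r → rmin = r) ∧
         |rmin - r - (Λ - ((n:ℝ) - 1) / r) * h| ≤ C * h^2) := by
  set a : ℝ := (n : ℝ) - 1
  refine ⟨min ((r / (2 * γ)) ^ 2) (r ^ 2 / (4 * (|a| + 1))), by positivity,
    2 * |a| * (|Λ| + 2 * |a| / r) / r ^ 2 + 1, by positivity, ?_⟩
  intro h ρ hh hh₀ hρ hEL hbound
  rw [div_eq_iff hh.ne', neg_div, neg_add_eq_sub] at hEL
  have hρr : r / 2 ≤ ρ :=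
    half_le_of_abs_sub_le_mul_sqrt hγ (hh₀.trans (min_le_left _ _)) hr hbound
  refine ⟨fun hΛ ↦ eq_of_critical hr.ne' hρ.ne' hEL hΛ ?_, ?_⟩
  · exact mul_lt_mul_of_half_le hr hρr hh.le (hh₀.trans (min_le_right _ _))
  · calc |ρ - r - (Λ - a / r) * h| ≤ 2 * |a| * (|Λ| + 2 * |a| / r) / r ^ 2 * h ^ 2 :=
          abs_sub_sub_linear_le_of_half_le hr hρr hh.le hEL
      _ ≤ (2 * |a| * (|Λ| + 2 * |a| / r) / r ^ 2 + 1) * h ^ 2 := by gcongr; linarith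

/-- If r_min > 0 solves the discrete Euler–Lagrange relation
(r_min - r)/h = -(n-1)/r_min + Λ and |r_min - r| ≤ γ h^{1/2}, then there exist
h₀ > 0 and C > 0 (depending only on n, r, Λ, γ) such that for 0 < h ≤ h₀:
if Λ = (n-1)/r then r_min = r, and in general
|r_min - r - (Λ - (n-1)/r) h| ≤ C h². -/
theorem discrete_euler_lagrange_radius
    (n : ℕ) (hn : 2 ≤ n) (r Λ γ : ℝ) (hr : 0 < r) (hγ : 0 < γ) :
    ∃ h₀ : ℝ, 0 < h₀ ∧ ∃ C : ℝ, 0 < C ∧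
      ∀ h rmin : ℝ, 0 < h → h ≤ h₀ → 0 < rmin →
        (rmin - r) / h = -((n:ℝ) - 1) / rmin + Λ →
        |rmin - r| ≤ γ * h ^ ((1:ℝ)/2) →
        ((Λ = ((n:ℝ) - 1) / r → rmin = r) ∧
         |rmin - r - (Λ - ((n:ℝ) - 1) / r) * h| ≤ C * h^2) :=
  discrete_euler_lagrange_radius_general n r Λ γ hr hγ
end
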